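/- Dyadic pointwise domination of the Riesz potential: Let 0 < α < n. There is a constant c = c(n,α) such that for every measurable f ≥ 0 on ℝⁿ and every x ∈ ℝⁿ, I_α f(x) ≤ c · Σ_{Q ∈ 𝒟} χ_Q(x) · |Q|^{α/n − 1} ∫_{3Q} f(y) dy, where 𝒟 is the collection of all dyadic cubes (cubes with lower-left corner 2^{−l}m and side length 2^{−l}, l ∈ ℤ, m ∈ ℤⁿ) and 3Q is the cube concentric with Q of three times the side length. -/

import Mathlib

open MeasureTheory ENNReal Set

noncomputable section

/-- Euclidean space `ℝⁿ`. -/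
abbrev Euc (n : ℕ) := EuclideanSpace ℝ (Fin n)

variable {n : ℕ}

/-- The axis-parallel closed cube with lower corner `a` and side length `h`. -/
def Cube (a : Euc n) (h : ℝ) : Set (Euc n) :=
  {x | ∀ i, a i ≤ x i ∧ x i ≤ a i + h}

/-- The weighted measure `u(E) = ∫_E u dx` of a set. -/
def wMeas (u : Euc n → ℝ) (E : Set (Euc n)) : ℝ≥0∞ :=
  ∫⁻ x in E, ENNReal.ofReal (u x)

/-- The dual exponent `p' = p/(p-1)`. -/
def dualExp (p : ℝ) : ℝ := p / (p - 1)

/-- The `A_{p,q}` constant of a weight `w` (with the `A_{1,q}` convention when `p = 1`). -/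
def Apq (p q : ℝ) (w : Euc n → ℝ) : ℝ≥0∞ :=
  ⨆ (a : Euc n) (h : ℝ) (_ : 0 < h),
    ((volume (Cube a h))⁻¹ * ∫⁻ x in Cube a h, ENNReal.ofReal (w x) ^ q) *
      (if p = 1 then
        (essSup (fun x => (ENNReal.ofReal (w x))⁻¹) (volume.restrict (Cube a h))) ^ q
      else
        ((volume (Cube a h))⁻¹ * ∫⁻ x in Cube a h,
            ENNReal.ofReal (w x) ^ (-(dualExp p))) ^ (q / dualExp p))

/-- The weighted Lebesgue norm `‖w f‖_{L^p(ℝⁿ)}`. -/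
def wLp (w f : Euc n → ℝ) (p : ℝ) : ℝ≥0∞ :=
  (∫⁻ x, (ENNReal.ofReal (w x) * ENNReal.ofReal |f x|) ^ p) ^ (1 / p)

/-- The weighted Lebesgue norm `‖w g‖_{L^q(ℝⁿ)}` of an `ℝ≥0∞`-valued function. -/
def wLpE (w : Euc n → ℝ) (g : Euc n → ℝ≥0∞) (q : ℝ) : ℝ≥0∞ :=
  (∫⁻ x, (ENNReal.ofReal (w x) * g x) ^ q) ^ (1 / q)

/-- The weak norm `‖g‖_{L^{q,∞}(u)} = sup_{λ>0} λ u({|g|>λ})^{1/q}`. -/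
def weakLp (u : Euc n → ℝ) (g : Euc n → ℝ) (q : ℝ) : ℝ≥0∞ :=
  ⨆ (t : ℝ) (_ : 0 < t), ENNReal.ofReal t * wMeas u {x | t < |g x|} ^ (1 / q)

/-- The weak norm of an `ℝ≥0∞`-valued function. -/
def weakLpE (u : Euc n → ℝ) (g : Euc n → ℝ≥0∞) (q : ℝ) : ℝ≥0∞ :=
  ⨆ (t : ℝ) (_ : 0 < t), ENNReal.ofReal t * wMeas u {x | ENNReal.ofReal t < g x} ^ (1 / q)

/-- The fractional integral (Riesz potential) `I_α f(x) = ∫ |f(y)| |x-y|^{α-n} dy`. -/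
def riesz (α : ℝ) (f : Euc n → ℝ) (x : Euc n) : ℝ≥0∞ :=
  ∫⁻ y, ENNReal.ofReal |f y| * ENNReal.ofReal (‖x - y‖ ^ (α - (n : ℝ)))

/-- The fractional maximal operator `M_α f(x) = sup_{Q ∋ x} |Q|^{α/n-1} ∫_Q |f|`. -/
def fracMax (α : ℝ) (f : Euc n → ℝ) (x : Euc n) : ℝ≥0∞ :=
  ⨆ (a : Euc n) (h : ℝ) (_ : 0 < h) (_ : x ∈ Cube a h),
    volume (Cube a h) ^ (α / (n : ℝ) - 1) * ∫⁻ y in Cube a h, ENNReal.ofReal |f y|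


/-- The lower corner of the dyadic cube indexed by `l : ℤ`, `m : ℤⁿ`, namely
`2^{-l} m`; the cube itself has side length `2^{-l}`. -/
def dyadicCorner (l : ℤ) (m : Fin n → ℤ) : Euc n :=
  WithLp.toLp 2 (fun i => (2 : ℝ) ^ (-l) * (m i : ℝ))

/-!
Around `x`, split `ℝⁿ` into the dyadic annuli `h/2 < ‖x - y‖ ≤ h`, `h = 2^{-l}`. On such an
annulus the kernel is at most `(h/2)^{α-n} ≤ 2^n |Q|^{α/n-1}`, where `Q` is the dyadic cube of
side `h` containing `x`, and the annulus lies in `3Q`. Summing over `l` gives the bound with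
`c = 2^n`.
-/

open Metric

def tripleCube (a : Euc n) (h : ℝ) : Set (Euc n) :=
  Cube (WithLp.toLp 2 fun i => a i - h) (3 * h)

lemma cube_eq_preimage_pi (a : Euc n) (h : ℝ) :
    Cube a h = WithLp.ofLp ⁻¹' Set.univ.pi fun i => Icc (a i) (a i + h) := by
  ext x
  simp only [Cube, mem_ofPred_eq, mem_preimage, mem_univ_pi, mem_Icc]

lemma isClosed_cube (a : Euc n) (h : ℝ) : IsClosed (Cube a h) := by
  rw [cube_eq_preimage_pi]
  exact (isClosed_set_pi fun i _ => isClosed_Icc).preimage (PiLp.continuous_ofLp 2 _)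

lemma volume_cube (a : Euc n) (h : ℝ) : volume (Cube a h) = ENNReal.ofReal h ^ n := by
  rw [cube_eq_preimage_pi, (PiLp.volume_preserving_ofLp (ι := Fin n)).measure_preimage
    (MeasurableSet.univ_pi fun i => measurableSet_Icc).nullMeasurableSet, volume_pi_pi]
  simp [Real.volume_Icc]

lemma mem_cube_floor (x : Euc n) {h : ℝ} (hh : 0 < h) :
    x ∈ Cube (WithLp.toLp 2 fun i => h * ⌊x i / h⌋) h := by
  intro i
  have hlo := Int.floor_le (x i / h)
  have hhi := Int.lt_floor_add_one (x i / h)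
  constructor
  · rwa [le_div_iff₀ hh, mul_comm] at hlo
  · rw [div_lt_iff₀ hh] at hhi
    linarith

lemma closedBall_subset_tripleCube {a x : Euc n} {h : ℝ} (hx : x ∈ Cube a h) :
    closedBall x h ⊆ tripleCube a h := by
  intro y hy i
  have hyi : |y i - x i| ≤ h := (PiLp.dist_apply_le y x i).trans (mem_closedBall.mp hy)
  obtain ⟨hlo, hhi⟩ := abs_le.mp hyi
  constructor <;> linarith [hx i]

/-- At `t = 0` the left side is the junk value `0 ^ s = 0`. -/
lemma ofReal_rpow_le_tsum_indicator_Ioc {s t : ℝ} (hs : s < 0) (ht : 0 ≤ t) :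
    ENNReal.ofReal (t ^ s) ≤ ∑' l : ℤ, (Ioc ((2 : ℝ) ^ (-l) / 2) ((2 : ℝ) ^ (-l))).indicator
      (fun _ => ENNReal.ofReal (((2 : ℝ) ^ (-l) / 2) ^ s)) t := by
  rcases ht.eq_or_lt with rfl | ht
  · simp [Real.zero_rpow hs.ne]
  obtain ⟨k, hk⟩ := exists_mem_Ioc_zpow ht one_lt_two
  have hradii : (2 : ℝ) ^ (-(-(k + 1))) / 2 = 2 ^ k ∧ (2 : ℝ) ^ (-(-(k + 1))) = 2 ^ (k + 1) := by
    rw [neg_neg, zpow_add_one₀ two_ne_zero]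
    simp
  refine le_trans ?_ (ENNReal.le_tsum (-(k + 1)))
  rw [hradii.1, hradii.2, indicator_of_mem hk]
  exact ENNReal.ofReal_le_ofReal (Real.rpow_le_rpow_of_nonpos (zpow_pos two_pos k) hk.1.le hs.le)

lemma ofReal_half_rpow_le {h α : ℝ} (hn : n ≠ 0) (hα : 0 ≤ α) (hh : 0 < h) :
    ENNReal.ofReal ((h / 2) ^ (α - n)) ≤
      ENNReal.ofReal (2 ^ n) * (ENNReal.ofReal h ^ n) ^ (α / n - 1) := by
  rw [← ENNReal.ofReal_pow hh.le, ENNReal.ofReal_rpow_of_pos (by positivity),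
    ← ENNReal.ofReal_mul (by positivity)]
  refine ENNReal.ofReal_le_ofReal ?_
  calc (h / 2) ^ (α - n) = (2 : ℝ) ^ ((n : ℝ) - α) * h ^ (α - n) := by
        rw [Real.div_rpow hh.le zero_le_two, div_eq_mul_inv, ← Real.rpow_neg zero_le_two, neg_sub,
          mul_comm]
    _ ≤ (2 : ℝ) ^ (n : ℝ) * h ^ (α - n) := by
        gcongr
        · exact one_le_two
        · linarith
    _ = 2 ^ n * (h ^ n) ^ (α / n - 1) := by
        rw [Real.rpow_natCast, ← Real.rpow_natCast h, ← Real.rpow_mul hh.le]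
        congr 2
        field_simp

lemma lintegral_mul_indicator_Ioc_le (f : Euc n → ℝ) {a x : Euc n} {h α : ℝ} (hn : n ≠ 0)
    (hα : 0 ≤ α) (hh : 0 < h) (hx : x ∈ Cube a h) :
    ∫⁻ y, ENNReal.ofReal (f y) *
        (Ioc (h / 2) h).indicator (fun _ => ENNReal.ofReal ((h / 2) ^ (α - n))) ‖x - y‖ ≤
      ENNReal.ofReal (2 ^ n) *
        (volume (Cube a h) ^ (α / n - 1) * ∫⁻ y in tripleCube a h, ENNReal.ofReal (f y)) := by
  set C := ENNReal.ofReal ((h / 2) ^ (α - n))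
  have hpoint : ∀ y, ENNReal.ofReal (f y) * (Ioc (h / 2) h).indicator (fun _ => C) ‖x - y‖ ≤
      C * (tripleCube a h).indicator (fun y => ENNReal.ofReal (f y)) y := by
    intro y
    by_cases hy : ‖x - y‖ ∈ Ioc (h / 2) h
    · have hy3 : y ∈ tripleCube a h :=
        closedBall_subset_tripleCube hx (by rw [mem_closedBall, dist_comm, dist_eq_norm]; exact hy.2)
      rw [indicator_of_mem hy, indicator_of_mem hy3, mul_comm]
    · simp [indicator_of_notMem hy]
  calc _ ≤ ∫⁻ y, C * (tripleCube a h).indicator (fun y => ENNReal.ofReal (f y)) y :=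
        lintegral_mono hpoint
    _ = C * ∫⁻ y in tripleCube a h, ENNReal.ofReal (f y) := by
        rw [lintegral_const_mul' _ _ ENNReal.ofReal_ne_top,
          lintegral_indicator (s := tripleCube a h) (isClosed_cube _ _).measurableSet]
    _ ≤ _ := by
        rw [← mul_assoc, volume_cube]
        gcongr
        exact ofReal_half_rpow_le hn hα hh

theorem riesz_dyadic_domination_general
    (n : ℕ) (α : ℝ) (hα : 0 < α) (hαn : α < n) :
    ∃ c : ℝ, 0 < c ∧ ∀ f : Euc n → ℝ, Measurable f → (∀ x, 0 ≤ f x) → ∀ x : Euc n,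
      riesz α f x ≤
        ENNReal.ofReal c *
          ∑' (l : ℤ) (m : Fin n → ℤ),
            Set.indicator (Cube (dyadicCorner l m) ((2 : ℝ) ^ (-l)))
              (fun _ =>
                volume (Cube (dyadicCorner l m) ((2 : ℝ) ^ (-l))) ^ (α / (n : ℝ) - 1) *
                  ∫⁻ y in Cube (WithLp.toLp 2 (fun i => dyadicCorner l m i - (2 : ℝ) ^ (-l)) : Euc n)
                      (3 * (2 : ℝ) ^ (-l)), ENNReal.ofReal (f y))
              x := by
  refine ⟨2 ^ n, by positivity, fun f hf hf0 x => ?_⟩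
  have hn : n ≠ 0 := by rintro rfl; norm_num at hαn; linarith
  rw [← ENNReal.tsum_mul_left]
  calc riesz α f x
      ≤ ∫⁻ y, ∑' l : ℤ, ENNReal.ofReal (f y) *
          (Ioc ((2 : ℝ) ^ (-l) / 2) (2 ^ (-l))).indicator
            (fun _ => ENNReal.ofReal (((2 : ℝ) ^ (-l) / 2) ^ (α - n))) ‖x - y‖ := by
        refine lintegral_mono fun y => ?_
        rw [abs_of_nonneg (hf0 y), ENNReal.tsum_mul_left]
        gcongr
        exact ofReal_rpow_le_tsum_indicator_Ioc (by linarith) (norm_nonneg _)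
    _ = ∑' l : ℤ, ∫⁻ y, ENNReal.ofReal (f y) *
          (Ioc ((2 : ℝ) ^ (-l) / 2) (2 ^ (-l))).indicator
            (fun _ => ENNReal.ofReal (((2 : ℝ) ^ (-l) / 2) ^ (α - n))) ‖x - y‖ :=
        lintegral_tsum fun l => (hf.ennreal_ofReal.mul ((measurable_const.indicator
          measurableSet_Ioc).comp (measurable_const.sub measurable_id).norm)).aemeasurable
    _ ≤ _ := by
        refine ENNReal.tsum_le_tsum fun l => ?_
        have hh : (0 : ℝ) < 2 ^ (-l) := zpow_pos two_pos _
        have hx := mem_cube_floor x hh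
        refine (lintegral_mul_indicator_Ioc_le f hn hα.le hh hx).trans ?_
        gcongr
        refine le_trans ?_ (ENNReal.le_tsum fun i => ⌊x i / 2 ^ (-l)⌋)
        exact (indicator_of_mem hx (M := ℝ≥0∞) _).ge

/-- Dyadic pointwise domination of the Riesz potential:
`I_α f(x) ≤ c Σ_{Q ∈ 𝒟} χ_Q(x) |Q|^{α/n-1} ∫_{3Q} f`, where `3Q` is the
concentric triple of `Q`. -/
theorem riesz_dyadic_domination
    (n : ℕ) (hn : 0 < n) (α : ℝ) (hα : 0 < α) (hαn : α < n) :
    ∃ c : ℝ, 0 < c ∧ ∀ f : Euc n → ℝ, Measurable f → (∀ x, 0 ≤ f x) → ∀ x : Euc n,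
      riesz α f x ≤
        ENNReal.ofReal c *
          ∑' (l : ℤ) (m : Fin n → ℤ),
            Set.indicator (Cube (dyadicCorner l m) ((2 : ℝ) ^ (-l)))
              (fun _ =>
                volume (Cube (dyadicCorner l m) ((2 : ℝ) ^ (-l))) ^ (α / (n : ℝ) - 1) *
                  ∫⁻ y in Cube (WithLp.toLp 2 (fun i => dyadicCorner l m i - (2 : ℝ) ^ (-l)) : Euc n)
                      (3 * (2 : ℝ) ^ (-l)), ENNReal.ofReal (f y))
              x :=
  riesz_dyadic_domination_general n α hα hαn

end
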